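/- For a positive integer y set ỹ = y/2 if y is even and ỹ = y if y is odd. Let T¹ be the set of positive non-square integers d with d ≡ 1 (mod 4) for which there exist integers y ≥ 1, x with 0 ≤ x < y and gcd(x, y) = 1, and a > ỹ such that |(2(a·y + x) − y)² − d·y²| = 4. Then there is a constant C such that Σ_{d ∈ T¹} d^{−s} ≤ C for every real s > 1; in particular Σ_{d ∈ T¹} 1/d converges, and Σ_{d ≡ 1 (mod 4), d non-square} d^{−s} − Σ_{d ≡ 1 (mod 4), d non-square, d ∉ T¹} d^{−s} remains bounded as s → 1⁺. -/

import Mathlib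

/-!
For `d ∈ T¹` fix a witness `(y, x, a)` and put `M = 2(ay + x) - y`, `e = M² - dy² = ±4`.
From `M ≥ (2a - 1)y` we get `a² ≤ 2d`, and `a > ỹ ≥ y/2` makes `k = ⌊8a/y⌋ ≥ 1` with
`(ky)² ≤ 128d`. The number `d` is recovered from `(y, x, k, e)`: two members `a < a'` of the same
progression satisfy `y ∣ 8(a' - a)`, so `k` separates them. The residue `x` is a root of
`4x² ≡ 4c² (mod y)` for a root `c` of `4c² ≡ e` fixed in advance; as `x` is coprime to `y`, the
divisors `gcd(y, 4(x - c))` and `gcd(y, 4(x + c))` of `y` have product between `y` and `8y`, and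
the first of them, `u`, determines `x` up to `9 · 32` choices. Writing `y = uw`, this bounds
`Σ 1/d` by a constant times `Σ_{u,w,k} 1/(uwk)²`; the bounds for `d^{-s}` follow termwise.
-/

/-- `ỹ = y/2` if `y` is even, `ỹ = y` if `y` is odd. -/
def ytilde (y : ℕ) : ℕ := if Even y then y / 2 else y

/-- `T⁰`: positive non-square integers `d` admitting a Pell-type solution
`|(a y + x)² - d y²| = 1` with `0 ≤ x < y` coprime and `a > ỹ`. -/
def T0 : Set ℕ :=
  {d : ℕ | 0 < d ∧ ¬ IsSquare d ∧ ∃ y x a : ℕ, 1 ≤ y ∧ x < y ∧ Nat.Coprime x y ∧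
    ytilde y < a ∧ |((a * y + x : ℕ) : ℤ) ^ 2 - (d : ℤ) * (y : ℤ) ^ 2| = 1}

/-- `T¹`: positive non-square integers `d ≡ 1 (mod 4)` admitting a Pell-type solution
`|(2(a y + x) - y)² - d y²| = 4` with `0 ≤ x < y` coprime and `a > ỹ`. -/
def T1 : Set ℕ :=
  {d : ℕ | 0 < d ∧ ¬ IsSquare d ∧ d % 4 = 1 ∧ ∃ y x a : ℕ, 1 ≤ y ∧ x < y ∧ Nat.Coprime x y ∧
    ytilde y < a ∧ |(2 * ((a * y + x : ℕ) : ℤ) - (y : ℤ)) ^ 2 - (d : ℤ) * (y : ℤ) ^ 2| = 4}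

lemma Nat.eq_of_modEq_of_div_eq {n p q : ℕ} (h : p ≡ q [MOD n]) (h' : p / n = q / n) :
    p = q := by
  rw [← Nat.div_add_mod p n, ← Nat.div_add_mod q n, h', h]

lemma Fin.eq_of_ofNat_eq {n a b : ℕ} [NeZero n] (ha : a < n) (hb : b < n)
    (h : Fin.ofNat n a = Fin.ofNat n b) : a = b := by
  simpa [Fin.ext_iff, Nat.mod_eq_of_lt ha, Nat.mod_eq_of_lt hb] using h

namespace T1

section RootCode

/- For `u = rootU`, `v = rootV`: `rootT = uv / y ∈ [1, 8]` recovers `v` from `u`, and then `4x` is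
known modulo `lcm u v ≥ y / 8`, so `rootR` pins down `x < y`. -/

variable (y c x : ℕ)

def rootU : ℕ := Int.gcd y (4 * ((x : ℤ) - c))

def rootV : ℕ := Int.gcd y (4 * ((x : ℤ) + c))

def rootT : ℕ := rootU y c x * rootV y c x / y

def rootR : ℕ := 4 * x / Nat.lcm (rootU y c x) (rootV y c x)

variable {y c x}

lemma rootU_dvd : rootU y c x ∣ y :=
  Int.natCast_dvd_natCast.mp (Int.gcd_dvd_left _ _)

lemma rootV_dvd : rootV y c x ∣ y :=
  Int.natCast_dvd_natCast.mp (Int.gcd_dvd_left _ _)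

lemma rootU_dvd_sub : (rootU y c x : ℤ) ∣ 4 * ((x : ℤ) - c) := Int.gcd_dvd_right _ _

lemma rootV_dvd_add : (rootV y c x : ℤ) ∣ 4 * ((x : ℤ) + c) := Int.gcd_dvd_right _ _

lemma rootU_pos (hy : 1 ≤ y) : 0 < rootU y c x :=
  Int.gcd_pos_of_ne_zero_left _ (by omega)

lemma rootV_pos (hy : 1 ≤ y) : 0 < rootV y c x :=
  Int.gcd_pos_of_ne_zero_left _ (by omega)

lemma dvd_rootU_mul_rootV (h : (y : ℤ) ∣ 4 * x ^ 2 - 4 * c ^ 2) :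
    y ∣ rootU y c x * rootV y c x := by
  have hprod : (y : ℤ) ∣ (4 * ((x : ℤ) - c)) * (4 * ((x : ℤ) + c)) := by
    have : (4 * ((x : ℤ) - c)) * (4 * ((x : ℤ) + c)) = 4 * (4 * x ^ 2 - 4 * c ^ 2) := by ring
    rw [this]; exact h.mul_left 4
  rw [Int.natCast_dvd, Int.natAbs_mul] at hprod
  calc y = Nat.gcd y _ := (Nat.gcd_eq_left hprod).symm
    _ ∣ _ := gcd_mul_dvd_mul_gcd _ _ _

lemma gcd_rootU_rootV_dvd_eight (hx : Nat.Coprime x y) :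
    Nat.gcd (rootU y c x) (rootV y c x) ∣ 8 := by
  set g := Nat.gcd (rootU y c x) (rootV y c x)
  have hgy : g ∣ y := (Nat.gcd_dvd_left _ _).trans rootU_dvd
  have hgU : (g : ℤ) ∣ 4 * ((x : ℤ) - c) :=
    (Int.natCast_dvd_natCast.mpr (Nat.gcd_dvd_left _ _)).trans rootU_dvd_sub
  have hgV : (g : ℤ) ∣ 4 * ((x : ℤ) + c) :=
    (Int.natCast_dvd_natCast.mpr (Nat.gcd_dvd_right _ _)).trans rootV_dvd_add
  have hg8x : g ∣ 8 * x := by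
    have := dvd_add hgU hgV
    rw [show 4 * ((x : ℤ) - c) + 4 * ((x : ℤ) + c) = ((8 * x : ℕ) : ℤ) by push_cast; ring] at this
    exact Int.natCast_dvd_natCast.mp this
  exact (Nat.Coprime.coprime_dvd_right hgy hx).symm.dvd_of_dvd_mul_right hg8x

lemma rootU_mul_rootV_dvd (hx : Nat.Coprime x y) :
    rootU y c x * rootV y c x ∣ 8 * y := by
  rw [← Nat.gcd_mul_lcm]
  exact mul_dvd_mul (gcd_rootU_rootV_dvd_eight hx) (Nat.lcm_dvd rootU_dvd rootV_dvd)

lemma rootT_mul (h : (y : ℤ) ∣ 4 * x ^ 2 - 4 * c ^ 2) :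
    rootT y c x * y = rootU y c x * rootV y c x :=
  Nat.div_mul_cancel (dvd_rootU_mul_rootV h)

lemma rootT_lt (hy : 1 ≤ y) (h : (y : ℤ) ∣ 4 * x ^ 2 - 4 * c ^ 2) (hx : Nat.Coprime x y) :
    rootT y c x < 9 := by
  have h8 : rootT y c x * y ∣ 8 * y := rootT_mul h ▸ rootU_mul_rootV_dvd hx
  have := Nat.le_of_dvd (by norm_num) ((Nat.mul_dvd_mul_iff_right hy).mp h8)
  omega

lemma le_eight_mul_lcm (hy : 1 ≤ y) (h : (y : ℤ) ∣ 4 * x ^ 2 - 4 * c ^ 2) (hx : Nat.Coprime x y) :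
    y ≤ 8 * Nat.lcm (rootU y c x) (rootV y c x) := by
  calc y ≤ rootU y c x * rootV y c x :=
        Nat.le_of_dvd (Nat.mul_pos (rootU_pos hy) (rootV_pos hy)) (dvd_rootU_mul_rootV h)
    _ = Nat.gcd (rootU y c x) (rootV y c x) * Nat.lcm (rootU y c x) (rootV y c x) :=
        (Nat.gcd_mul_lcm _ _).symm
    _ ≤ 8 * Nat.lcm (rootU y c x) (rootV y c x) :=
        Nat.mul_le_mul_right _ (Nat.le_of_dvd (by norm_num) (gcd_rootU_rootV_dvd_eight hx))

lemma rootR_lt (hy : 1 ≤ y) (h : (y : ℤ) ∣ 4 * x ^ 2 - 4 * c ^ 2) (hx : Nat.Coprime x y)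
    (hxy : x < y) : rootR y c x < 32 := by
  have := le_eight_mul_lcm hy h hx
  exact (Nat.div_lt_iff_lt_mul (Nat.lcm_pos (rootU_pos hy) (rootV_pos hy))).mpr (by omega)

lemma eq_of_rootCode_eq {x' : ℕ} (hy : 1 ≤ y)
    (h : (y : ℤ) ∣ 4 * x ^ 2 - 4 * c ^ 2) (h' : (y : ℤ) ∣ 4 * x' ^ 2 - 4 * c ^ 2)
    (hU : rootU y c x = rootU y c x') (hT : rootT y c x = rootT y c x')
    (hR : rootR y c x = rootR y c x') : x = x' := by
  have hV : rootV y c x = rootV y c x' := by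
    refine Nat.eq_of_mul_eq_mul_left (rootU_pos (c := c) (x := x) hy) ?_
    rw [← rootT_mul h, hT, rootT_mul h', hU]
  have hU' : (rootU y c x : ℤ) ∣ 4 * (x' : ℤ) - 4 * x := by
    have := dvd_sub (hU ▸ rootU_dvd_sub (x := x')) (rootU_dvd_sub (x := x))
    rwa [show 4 * ((x' : ℤ) - c) - 4 * (x - c) = 4 * x' - 4 * x by ring] at this
  have hV' : (rootV y c x : ℤ) ∣ 4 * (x' : ℤ) - 4 * x := by
    have := dvd_sub (hV ▸ rootV_dvd_add (x := x')) (rootV_dvd_add (x := x))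
    rwa [show 4 * ((x' : ℤ) + c) - 4 * (x + c) = 4 * x' - 4 * x by ring] at this
  have hL : 4 * x ≡ 4 * x' [MOD Nat.lcm (rootU y c x) (rootV y c x)] := by
    rw [Nat.modEq_iff_dvd, Int.natCast_dvd]
    exact Nat.lcm_dvd (Int.natCast_dvd.mp (by exact_mod_cast hU'))
      (Int.natCast_dvd.mp (by exact_mod_cast hV'))
  have h4 := Nat.eq_of_modEq_of_div_eq hL (by unfold rootR at hR; rwa [hU, hV] at hR ⊢)
  omega

end RootCode

lemma dvd_eight_mul_sub_of_sq_dvd {y x a a' e : ℤ} (hy : y ≠ 0) (hxy : IsCoprime y x)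
    (h : y ^ 2 ∣ (2 * (a * y + x) - y) ^ 2 - e) (h' : y ^ 2 ∣ (2 * (a' * y + x) - y) ^ 2 - e) :
    y ∣ 8 * (a' - a) := by
  have hdiff : y * y ∣ y * (4 * (a' - a) * (a + a' - 1) * y + 8 * (a' - a) * x) := by
    have key : (2 * (a' * y + x) - y) ^ 2 - e - ((2 * (a * y + x) - y) ^ 2 - e) =
        y * (4 * (a' - a) * (a + a' - 1) * y + 8 * (a' - a) * x) := by ring
    exact pow_two y ▸ key ▸ dvd_sub h' h
  have h8x := (dvd_add_right (dvd_mul_left y _)).mp ((mul_dvd_mul_iff_left hy).mp hdiff)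
  exact hxy.dvd_of_dvd_mul_right h8x

lemma le_two_mul_ytilde (y : ℕ) : y ≤ 2 * ytilde y := by
  unfold ytilde
  split_ifs with h
  · obtain ⟨c, rfl⟩ := h
    omega
  · omega

def pellDefect (d y x a : ℕ) : ℤ :=
  (2 * ((a * y + x : ℕ) : ℤ) - (y : ℤ)) ^ 2 - (d : ℤ) * (y : ℤ) ^ 2

def IsWitness (d y x a : ℕ) : Prop :=
  1 ≤ y ∧ x < y ∧ Nat.Coprime x y ∧ ytilde y < a ∧ |pellDefect d y x a| = 4

lemma exists_isWitness {d : ℕ} (hd : d ∈ T1) : ∃ y x a, IsWitness d y x a := hd.2.2.2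

lemma sq_dvd_pellDefect (d y x a : ℕ) :
    (y : ℤ) ^ 2 ∣ (2 * ((a : ℤ) * y + x) - y) ^ 2 - pellDefect d y x a :=
  ⟨d, by unfold pellDefect; push_cast; ring⟩

lemma dvd_four_mul_sq_sub_pellDefect (d y x a : ℕ) :
    (y : ℤ) ∣ 4 * (x : ℤ) ^ 2 - pellDefect d y x a :=
  ⟨d * y - (2 * a - 1) * (2 * (a * y + x) - y + 2 * x), by unfold pellDefect; push_cast; ring⟩

noncomputable def baseRoot (y : ℕ) (e : ℤ) : ℕ :=
  Classical.epsilon fun c : ℕ => (y : ℤ) ∣ 4 * (c : ℤ) ^ 2 - e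

lemma dvd_four_mul_sq_sub_baseRoot {y x : ℕ} {e : ℤ} (h : (y : ℤ) ∣ 4 * (x : ℤ) ^ 2 - e) :
    (y : ℤ) ∣ 4 * (x : ℤ) ^ 2 - 4 * (baseRoot y e : ℤ) ^ 2 := by
  have hc : (y : ℤ) ∣ 4 * (baseRoot y e : ℤ) ^ 2 - e :=
    Classical.epsilon_spec (p := fun c : ℕ => (y : ℤ) ∣ 4 * (c : ℤ) ^ 2 - e) ⟨x, h⟩
  have key : 4 * (x : ℤ) ^ 2 - e - (4 * (baseRoot y e : ℤ) ^ 2 - e) =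
      4 * (x : ℤ) ^ 2 - 4 * (baseRoot y e : ℤ) ^ 2 := by ring
  exact key ▸ dvd_sub h hc

noncomputable def code (y x a : ℕ) (e : ℤ) : (ℕ × ℕ × ℕ) × Fin 9 × Fin 32 × Bool :=
  ((rootU y (baseRoot y e) x, y / rootU y (baseRoot y e) x, 8 * a / y),
    Fin.ofNat 9 (rootT y (baseRoot y e) x), Fin.ofNat 32 (rootR y (baseRoot y e) x), decide (e = 4))

noncomputable def codeWeight (p : (ℕ × ℕ × ℕ) × Fin 9 × Fin 32 × Bool) : ℝ :=
  1 / (p.1.1 : ℝ) ^ 2 * (1 / (p.1.2.1 : ℝ) ^ 2 * (1 / (p.1.2.2 : ℝ) ^ 2))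

lemma summable_codeWeight : Summable codeWeight := by
  have h := Real.summable_one_div_nat_pow.mpr one_lt_two
  have h3 := h.mul_of_nonneg (h.mul_of_nonneg h (fun _ => by positivity) (fun _ => by positivity))
    (fun _ => by positivity) (fun _ => by positivity)
  exact (h3.mul_of_nonneg (Summable.of_finite (f := fun _ : Fin 9 × Fin 32 × Bool => (1 : ℝ)))
    (fun _ => by positivity) (fun _ => zero_le_one)).congr fun _ => mul_one _

namespace IsWitness

variable {d y x a d' y' x' a' : ℕ}

lemma pellDefect_eq (hw : IsWitness d y x a) :
    pellDefect d y x a = 4 ∨ pellDefect d y x a = -4 :=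
  (abs_eq (by norm_num)).mp hw.2.2.2.2

lemma le_eight_mul (hw : IsWitness d y x a) : y ≤ 8 * a := by
  have := le_two_mul_ytilde y
  have := hw.2.2.2.1
  omega

lemma sq_le_two_mul (hw : IsWitness d y x a) : a ^ 2 ≤ 2 * d := by
  obtain ⟨hy, -, -, ha, he⟩ := hw
  have hy' : (1 : ℤ) ≤ y := by exact_mod_cast hy
  have ha' : (2 : ℤ) ≤ a := by have := le_two_mul_ytilde y; exact_mod_cast (by omega : 2 ≤ a)
  set M : ℤ := 2 * ((a * y + x : ℕ) : ℤ) - y with hM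
  have hMa : (2 * a - 1 : ℤ) * y ≤ M := by push_cast [hM]; nlinarith
  have hM3 : 3 ≤ M := by nlinarith
  have hMd : M ^ 2 - 4 ≤ d * (y : ℤ) ^ 2 := by
    unfold pellDefect at he
    linarith [le_abs_self (M ^ 2 - d * (y : ℤ) ^ 2)]
  have hay : ((a : ℤ) * y) ^ 2 ≤ M ^ 2 := pow_le_pow_left₀ (by positivity) (by nlinarith) 2
  have : ((a : ℤ) ^ 2) * y ^ 2 ≤ (2 * d) * y ^ 2 := by nlinarith
  exact_mod_cast le_of_mul_le_mul_right this (by positivity)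


lemma eq_of_pellDefect_eq_of_div_eq (hw : IsWitness d y x a) (hw' : IsWitness d' y x a')
    (he : pellDefect d y x a = pellDefect d' y x a') (hk : 8 * a / y = 8 * a' / y) : d = d' := by
  have hy : (y : ℤ) ≠ 0 := by have := hw.1; positivity
  have hcop : IsCoprime (y : ℤ) x := Nat.isCoprime_iff_coprime.mpr hw.2.2.1.symm
  have h8 := dvd_eight_mul_sub_of_sq_dvd hy hcop (sq_dvd_pellDefect d y x a)
    (he ▸ sq_dvd_pellDefect d' y x a')
  have ha : 8 * a = 8 * a' :=
    Nat.eq_of_modEq_of_div_eq (Nat.modEq_iff_dvd.mpr (by push_cast; rwa [← mul_sub])) hk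
  obtain rfl : a = a' := by omega
  unfold pellDefect at he
  have : (d : ℤ) * y ^ 2 = d' * y ^ 2 := by linarith
  exact_mod_cast mul_right_cancel₀ (pow_ne_zero 2 hy) this

lemma eq_of_code_eq (hw : IsWitness d y x a) (hw' : IsWitness d' y' x' a')
    (h : code y x a (pellDefect d y x a) = code y' x' a' (pellDefect d' y' x' a')) : d = d' := by
  simp only [code, Prod.mk.injEq] at h
  obtain ⟨⟨hU, hW, hk⟩, hT, hR, hsign⟩ := h
  have he : pellDefect d y x a = pellDefect d' y' x' a' := by
    rcases hw.pellDefect_eq with h1 | h1 <;> rcases hw'.pellDefect_eq with h2 | h2 <;>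
      simp [h1, h2] at hsign ⊢
  obtain rfl : y = y' :=
    calc y = rootU y (baseRoot y (pellDefect d y x a)) x * (y / rootU y _ x) :=
          (Nat.mul_div_cancel' rootU_dvd).symm
      _ = rootU y' (baseRoot y' (pellDefect d' y' x' a')) x' * (y' / rootU y' _ x') := by
          rw [hW, hU]
      _ = y' := Nat.mul_div_cancel' rootU_dvd
  rw [← he] at hU hT hR
  have hroot := dvd_four_mul_sq_sub_baseRoot (dvd_four_mul_sq_sub_pellDefect d y x a)
  have hroot' := he ▸ dvd_four_mul_sq_sub_baseRoot (dvd_four_mul_sq_sub_pellDefect d' y x' a')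
  obtain rfl : x = x' := eq_of_rootCode_eq hw.1 hroot hroot' hU
    (Fin.eq_of_ofNat_eq (rootT_lt hw.1 hroot hw.2.2.1) (rootT_lt hw.1 hroot' hw'.2.2.1) hT)
    (Fin.eq_of_ofNat_eq (rootR_lt hw.1 hroot hw.2.2.1 hw.2.1)
      (rootR_lt hw.1 hroot' hw'.2.2.1 hw'.2.1) hR)
  exact hw.eq_of_pellDefect_eq_of_div_eq hw' he hk

lemma one_div_le_codeWeight (hw : IsWitness d y x a) :
    1 / (d : ℝ) ≤ 128 * codeWeight (code y x a (pellDefect d y x a)) := by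
  set u := rootU y (baseRoot y (pellDefect d y x a)) x
  have huw : u * (y / u) = y := Nat.mul_div_cancel' rootU_dvd
  have hk : 1 ≤ 8 * a / y := (Nat.le_div_iff_mul_le hw.1).mpr (by simpa using hw.le_eight_mul)
  have hbound : (8 * a / y * y) ^ 2 ≤ 128 * d :=
    calc (8 * a / y * y) ^ 2 ≤ (8 * a) ^ 2 := Nat.pow_le_pow_left (Nat.div_mul_le_self _ _) 2
      _ ≤ 128 * d := by nlinarith [hw.sq_le_two_mul]
  have hpos : 0 < 8 * a / y * y := Nat.mul_pos hk hw.1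
  have hd : 0 < d := by have := pow_pos hpos 2; omega
  have hweight :
      codeWeight (code y x a (pellDefect d y x a)) = 1 / ((8 * a / y * y : ℕ) : ℝ) ^ 2 := by
    have hcast : ((8 * a / y * y : ℕ) : ℝ) = (8 * a / y : ℕ) * u * (y / u : ℕ) := by
      rw [mul_assoc, ← Nat.cast_mul u, huw, Nat.cast_mul]
    rw [hcast]
    simp only [codeWeight, code]
    ring
  rw [hweight, mul_one_div, div_le_div_iff₀ (by exact_mod_cast hd) (by positivity), one_mul]
  exact_mod_cast hbound

end IsWitness

theorem summable_one_div : Summable fun d : T1 => 1 / ((d : ℕ) : ℝ) := by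
  choose y x a hw using fun d : T1 => exists_isWitness d.2
  exact Summable.of_nonneg_of_le (fun _ => by positivity) (fun d => (hw d).one_div_le_codeWeight)
    ((summable_codeWeight.mul_left 128).comp_injective
      fun d d' h => Subtype.ext ((hw d).eq_of_code_eq (hw d') h))

end T1

lemma Nat.rpow_neg_le_one_div (n : ℕ) {s : ℝ} (hs : 1 ≤ s) : (n : ℝ) ^ (-s) ≤ 1 / n := by
  rcases Nat.eq_zero_or_pos n with rfl | hn
  · simp [Real.zero_rpow (by linarith : -s ≠ 0)]
  · have := Real.rpow_le_rpow_of_exponent_le (x := n) (by exact_mod_cast hn) (neg_le_neg hs)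
    rwa [Real.rpow_neg_one, ← one_div] at this

lemma tsum_rpow_neg_le_tsum_one_div {S : Set ℕ} (h : Summable fun n : S => 1 / (n : ℝ))
    {s : ℝ} (hs : 1 ≤ s) : ∑' n : S, (n : ℝ) ^ (-s) ≤ ∑' n : S, 1 / (n : ℝ) :=
  have hle (n : S) : (n : ℝ) ^ (-s) ≤ 1 / (n : ℝ) := Nat.rpow_neg_le_one_div n hs
  Summable.tsum_le_tsum hle
    (Summable.of_nonneg_of_le (fun _ => Real.rpow_nonneg (Nat.cast_nonneg _) _) hle h) h

/-- there is a constant `C` bounding `Σ_{d ∈ T¹} d^{-s}` for all real `s > 1`;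
in particular `Σ_{d ∈ T¹} 1/d` converges, and
`Σ_{d ≡ 1 (4), d non-square} d^{-s} - Σ_{d ≡ 1 (4), d non-square, d ∉ T¹} d^{-s}` remains
bounded as `s → 1⁺`. -/
theorem stmt_18 :
    (∃ C : ℝ, ∀ s : ℝ, 1 < s → ∑' d : T1, ((d : ℕ) : ℝ) ^ (-s) ≤ C) ∧
    Summable (fun d : T1 => 1 / ((d : ℕ) : ℝ)) ∧
    (∃ C : ℝ, ∀ s : ℝ, 1 < s →
      |(∑' d : {d : ℕ | 0 < d ∧ ¬ IsSquare d ∧ d % 4 = 1}, ((d : ℕ) : ℝ) ^ (-s)) -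
        ∑' d : {d : ℕ | 0 < d ∧ ¬ IsSquare d ∧ d % 4 = 1 ∧ d ∉ T1}, ((d : ℕ) : ℝ) ^ (-s)| ≤ C) := by
  have hT1 := T1.summable_one_div
  have hle (s : ℝ) (hs : 1 < s) :
      ∑' d : T1, ((d : ℕ) : ℝ) ^ (-s) ≤ ∑' d : T1, 1 / ((d : ℕ) : ℝ) :=
    tsum_rpow_neg_le_tsum_one_div hT1 hs.le
  refine ⟨⟨_, hle⟩, hT1, ⟨∑' d : T1, 1 / ((d : ℕ) : ℝ), fun s hs => ?_⟩⟩
  have hsum : Summable fun n : ℕ => (n : ℝ) ^ (-s) := Real.summable_nat_rpow.mpr (by linarith)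
  have hsplit : {d : ℕ | 0 < d ∧ ¬ IsSquare d ∧ d % 4 = 1} =
      {d : ℕ | 0 < d ∧ ¬ IsSquare d ∧ d % 4 = 1 ∧ d ∉ T1} ∪ T1 := by
    ext d
    have hmem : d ∈ T1 → 0 < d ∧ ¬ IsSquare d ∧ d % 4 = 1 := fun h => ⟨h.1, h.2.1, h.2.2.1⟩
    simp only [Set.mem_union, Set.mem_ofPred_eq]
    tauto
  have hdisj : Disjoint {d : ℕ | 0 < d ∧ ¬ IsSquare d ∧ d % 4 = 1 ∧ d ∉ T1} T1 :=
    Set.disjoint_left.mpr fun _ h => h.2.2.2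
  rw [hsplit, Summable.tsum_union_disjoint hdisj (hsum.subtype _) (hsum.subtype _),
    add_sub_cancel_left, abs_of_nonneg (tsum_nonneg fun _ => by positivity)]
  exact hle s hs
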